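/- Let Γ_N be the graph formed by two disjoint complete graphs K_N, K'_N joined by c additional edges (v_i, v'_i) with v_i ∈ K_N, v'_i ∈ K'_N, i = 1,…,c, with the v_i distinct and the v'_i distinct, and c < N - 1. Then N/(N-1) is an eigenvalue of the normalized Laplacian of Γ_N with multiplicity at least 2(N-1-c). -/

import Mathlib

/-!
Let `T` be a clique of a graph and `S ⊆ T` a set of vertices with no neighbours outside `T`.
The vertices of `S` have degree `|T| - 1`, so for `f` supported on `S` with zero sum the
normalized Laplacian gives `f x + f x / (|T| - 1)` at `x ∈ S` (its neighbours in `S` carry total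
weight `-f x`) and `0` elsewhere (a vertex outside `S` sees either all of `S` or none of it).
In `Γ_N` take for `T` either copy of `K_N` and for `S` its at least `N - c` vertices not
incident to an extra edge: this gives two disjoint subspaces of dimension at least `N - c - 1`
of the eigenspace of `N / (N - 1)`, and the multiplicity of an eigenvalue of a Hermitian matrix is the dimension of
its eigenspace.
-/

open Matrix Finset
open scoped Classical

/-- The symmetric normalized Laplacian `I - D^{-1/2} A D^{-1/2}`. -/
noncomputable def normLap {V : Type*} [Fintype V] [DecidableEq V] (G : SimpleGraph V) :
    Matrix V V ℝ :=
  1 - Matrix.of fun i j =>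
    (G.adjMatrix ℝ) i j / (Real.sqrt (G.degree i) * Real.sqrt (G.degree j))

open Module LinearMap

namespace Matrix.IsHermitian

variable {𝕜 : Type*} [RCLike 𝕜] {n : Type*} [Fintype n] [DecidableEq n] {A : Matrix n n 𝕜}

theorem card_filter_eigenvalues_eq (hA : A.IsHermitian) (μ : ℝ) :
    #{i | hA.eigenvalues i = μ} = finrank 𝕜 (End.eigenspace (toLin' A) μ) := by
  have hspace : End.eigenspace (toEuclideanLin A) μ
      = (End.eigenspace (toLin' A) μ).comap (WithLp.linearEquiv 2 𝕜 (n → 𝕜)).toLinearMap := by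
    ext x
    simp only [End.mem_eigenspace_iff, Submodule.mem_comap]
    exact (WithLp.linearEquiv 2 𝕜 (n → 𝕜)).apply_eq_iff_eq.symm
  calc #{i | hA.eigenvalues i = μ} = #{j | hA.eigenvalues₀ j = μ} :=
        Finset.card_equiv (Fintype.equivOfCardEq (Fintype.card_fin _)).symm
          (fun i => by rw [mem_filter_univ, mem_filter_univ]; rfl)
    _ = #{j | (hA.eigenvalues₀ j : 𝕜) = μ} := by simp only [RCLike.ofReal_inj]
    _ = finrank 𝕜 (End.eigenspace (toEuclideanLin A) μ) :=
        LinearMap.IsSymmetric.card_filter_eigenvalues_eq _ _ _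
    _ = finrank 𝕜 (End.eigenspace (toLin' A) μ) := by
        rw [hspace, Submodule.comap_equiv_eq_map_symm, LinearEquiv.finrank_map_eq]

end Matrix.IsHermitian

theorem Submodule.finrank_le_finrank_inf_ker_add_one {K V : Type*} [Field K] [AddCommGroup V]
    [Module K V] [FiniteDimensional K V] (U : Submodule K V) (φ : Module.Dual K V) :
    finrank K U ≤ finrank K ↥(U ⊓ ker φ) + 1 := by
  have hsup := Submodule.finrank_sup_add_finrank_inf_eq U (ker φ)
  have hrange := φ.finrank_range_add_finrank_ker
  have hle : finrank K ↥(U ⊔ ker φ) ≤ finrank K V := Submodule.finrank_le _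
  have hrange_le : finrank K (range φ) ≤ 1 := (Submodule.finrank_le _).trans_eq (finrank_self K)
  omega

section ZeroSumOn

variable (K : Type*) [Field K] {V : Type*} [Fintype V]

def zeroSumOn (S : Finset V) : Submodule K (V → K) :=
  (⨅ x ∈ (↑S : Set V)ᶜ, ker (proj x)) ⊓ ker (∑ x, proj x)

variable {K}

theorem mem_zeroSumOn {S : Finset V} {f : V → K} :
    f ∈ zeroSumOn K S ↔ (∀ x ∉ S, f x = 0) ∧ ∑ x, f x = 0 := by
  simp [zeroSumOn, Submodule.mem_iInf]

theorem card_sub_one_le_finrank_zeroSumOn (S : Finset V) :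
    #S - 1 ≤ finrank K (zeroSumOn K S) := by
  have hsupp : finrank K ↥(⨅ x ∈ (↑S : Set V)ᶜ, ker (proj x : (V → K) →ₗ[K] K)) = #S := by
    rw [(iInfKerProjEquiv K (fun _ : V => K) disjoint_compl_right (by simp)).finrank_eq]
    simp
  have := Submodule.finrank_le_finrank_inf_ker_add_one
    (⨅ x ∈ (↑S : Set V)ᶜ, ker (proj x : (V → K) →ₗ[K] K)) (∑ x, proj x)
  rw [zeroSumOn]
  omega

theorem disjoint_zeroSumOn {S S' : Finset V} (h : Disjoint S S') :
    Disjoint (zeroSumOn K S) (zeroSumOn K S') := by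
  rw [Submodule.disjoint_def]
  intro f hf hf'
  ext x
  by_cases hx : x ∈ S
  · exact (mem_zeroSumOn.mp hf').1 x (Finset.disjoint_left.mp h hx)
  · exact (mem_zeroSumOn.mp hf).1 x hx

end ZeroSumOn

namespace SimpleGraph

variable {V : Type*} [Fintype V] [DecidableEq V] {G : SimpleGraph V}

theorem degree_eq_card_sub_one_of_isClique {T : Finset V} (hT : G.IsClique T) {y : V}
    (hy : y ∈ T) (hout : ∀ x ∉ T, ¬ G.Adj x y) : G.degree y = #T - 1 := by
  rw [← card_neighborFinset_eq_degree, ← card_erase_of_mem hy]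
  congr 1
  ext x
  rw [mem_neighborFinset, mem_erase]
  refine ⟨fun hxy => ⟨hxy.ne.symm, ?_⟩, fun ⟨hne, hx⟩ => hT hy hx hne.symm⟩
  by_contra hx
  exact hout x hx hxy.symm

/-- Stated with `1 + (|T| - 1)⁻¹` rather than `|T| / (|T| - 1)` so that it also holds for
`|T| = 1`, where `0⁻¹ = 0`. -/
theorem normLap_mulVec_eq_of_isClique {T S : Finset V} (hT : G.IsClique T) (hST : S ⊆ T)
    (hout : ∀ x ∉ T, ∀ y ∈ S, ¬ G.Adj x y) {f : V → ℝ} (hf : ∀ x ∉ S, f x = 0)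
    (hsum : ∑ x, f x = 0) : normLap G *ᵥ f = (1 + ((#T : ℝ) - 1)⁻¹) • f := by
  set δ : ℝ := #T - 1
  have hdeg : ∀ y ∈ S, (G.degree y : ℝ) = δ := fun y hy => by
    rw [degree_eq_card_sub_one_of_isClique hT (hST hy) fun x hx => hout x hx y hy,
      Nat.cast_sub (card_pos.mpr ⟨y, hST hy⟩)]
    simp [δ]
  have hsumS : ∑ y ∈ S, f y = 0 := by
    rwa [sum_subset (subset_univ S) fun y _ hy => hf y hy]
  have hrow : ∀ x, (normLap G *ᵥ f) x
      = f x - (∑ y ∈ S, G.adjMatrix ℝ x y * f y) / (√(G.degree x) * √δ) := fun x => by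
    rw [normLap, sub_mulVec, one_mulVec, Pi.sub_apply, mulVec, dotProduct, sum_div,
      ← sum_subset (subset_univ S) fun y _ hy => by simp [hf y hy]]
    refine congrArg _ (sum_congr rfl fun y hy => ?_)
    rw [of_apply, hdeg y hy]
    ring
  ext x
  rw [hrow, Pi.smul_apply, smul_eq_mul]
  by_cases hx : x ∈ S
  · have hδ : 0 ≤ δ := by rw [← hdeg x hx]; positivity
    have hsum_adj : ∑ y ∈ S, G.adjMatrix ℝ x y * f y = - f x := by
      calc ∑ y ∈ S, G.adjMatrix ℝ x y * f y = ∑ y ∈ S.erase x, f y := by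
            rw [← sum_erase_add _ _ hx, adjMatrix_apply, if_neg G.irrefl, zero_mul, add_zero]
            refine sum_congr rfl fun y hy => ?_
            rw [adjMatrix_apply, if_pos (hT (hST hx) (hST (mem_of_mem_erase hy))
              (ne_of_mem_erase hy).symm), one_mul]
        _ = - f x := by rw [sum_erase_eq_sub hx, hsumS, zero_sub]
    rw [hsum_adj, hdeg x hx, Real.mul_self_sqrt hδ]
    ring
  · have hsum_adj : ∑ y ∈ S, G.adjMatrix ℝ x y * f y = 0 := by
      by_cases hxT : x ∈ T
      · rw [← hsumS]
        refine sum_congr rfl fun y hy => ?_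
        rw [adjMatrix_apply, if_pos (hT hxT (hST hy) (ne_of_mem_of_not_mem hy hx).symm), one_mul]
      · exact sum_eq_zero fun y hy => by
          rw [adjMatrix_apply, if_neg (hout x hxT y hy), zero_mul]
    rw [hsum_adj, hf x hx]
    simp

theorem zeroSumOn_le_eigenspace_normLap {T S : Finset V} (hT : G.IsClique T) (hST : S ⊆ T)
    (hout : ∀ x ∉ T, ∀ y ∈ S, ¬ G.Adj x y) :
    zeroSumOn ℝ S ≤ End.eigenspace (toLin' (normLap G)) (1 + ((#T : ℝ) - 1)⁻¹) := fun f hf => by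
  obtain ⟨hsupp, hsum⟩ := mem_zeroSumOn.mp hf
  rw [End.mem_eigenspace_iff, toLin'_apply]
  exact normLap_mulVec_eq_of_isClique hT hST hout hsupp hsum

end SimpleGraph

section JoinedCompleteGraphs

variable {N c : ℕ} {v v' : Fin c → Fin N} {G : SimpleGraph (Fin N ⊕ Fin N)}
  (hAdj : ∀ x y, G.Adj x y ↔
      (x ≠ y ∧ x.isLeft = y.isLeft) ∨
        ∃ i, (x = Sum.inl (v i) ∧ y = Sum.inr (v' i)) ∨
             (x = Sum.inr (v' i) ∧ y = Sum.inl (v i)))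
include hAdj

theorem zeroSumOn_free_left_le_eigenspace :
    zeroSumOn ℝ ((univ.image v)ᶜ.map .inl) ≤
      End.eigenspace (toLin' (normLap G)) (1 + ((N : ℝ) - 1)⁻¹) := by
  have hT : G.IsClique (univ.map (.inl : Fin N ↪ Fin N ⊕ Fin N) : Set _) := by
    intro x hx y hy hxy
    obtain ⟨a, -, rfl⟩ := mem_map.mp (mem_coe.mp hx)
    obtain ⟨b, -, rfl⟩ := mem_map.mp (mem_coe.mp hy)
    simpa [hAdj] using hxy
  have hout : ∀ x ∉ univ.map .inl, ∀ y ∈ (univ.image v)ᶜ.map .inl, ¬ G.Adj x y := by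
    rintro (b | b) hb y hy
    · exact absurd (mem_map_of_mem _ (mem_univ b)) hb
    · obtain ⟨a, ha, rfl⟩ := mem_map.mp hy
      simp only [mem_compl, mem_image, mem_univ, true_and, not_exists] at ha
      simp [hAdj, fun i => Ne.symm (ha i)]
  simpa using SimpleGraph.zeroSumOn_le_eigenspace_normLap hT
    (map_subset_map.mpr (subset_univ _)) hout

theorem zeroSumOn_free_right_le_eigenspace :
    zeroSumOn ℝ ((univ.image v')ᶜ.map .inr) ≤
      End.eigenspace (toLin' (normLap G)) (1 + ((N : ℝ) - 1)⁻¹) := by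
  have hT : G.IsClique (univ.map (.inr : Fin N ↪ Fin N ⊕ Fin N) : Set _) := by
    intro x hx y hy hxy
    obtain ⟨a, -, rfl⟩ := mem_map.mp (mem_coe.mp hx)
    obtain ⟨b, -, rfl⟩ := mem_map.mp (mem_coe.mp hy)
    simpa [hAdj] using hxy
  have hout : ∀ x ∉ univ.map .inr, ∀ y ∈ (univ.image v')ᶜ.map .inr, ¬ G.Adj x y := by
    rintro (b | b) hb y hy
    · obtain ⟨a, ha, rfl⟩ := mem_map.mp hy
      simp only [mem_compl, mem_image, mem_univ, true_and, not_exists] at ha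
      simp [hAdj, fun i => Ne.symm (ha i)]
    · exact absurd (mem_map_of_mem _ (mem_univ b)) hb
  simpa using SimpleGraph.zeroSumOn_le_eigenspace_normLap hT
    (map_subset_map.mpr (subset_univ _)) hout

end JoinedCompleteGraphs

theorem normLap_joined_complete_graphs_eigenvalue_multiplicity_general
    (N c : ℕ) (hN : 2 ≤ N)
    (v v' : Fin c → Fin N)
    (G : SimpleGraph (Fin N ⊕ Fin N))
    (hAdj : ∀ x y, G.Adj x y ↔
      (x ≠ y ∧ x.isLeft = y.isLeft) ∨
        ∃ i, (x = Sum.inl (v i) ∧ y = Sum.inr (v' i)) ∨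
             (x = Sum.inr (v' i) ∧ y = Sum.inl (v i)))
    (hH : (normLap G).IsHermitian) :
    2 * (N - 1 - c) ≤
      (Finset.univ.filter fun i => hH.eigenvalues i = (N : ℝ) / ((N : ℝ) - 1)).card := by
  set L := (univ.image v)ᶜ.map (.inl : Fin N ↪ Fin N ⊕ Fin N)
  set R := (univ.image v')ᶜ.map (.inr : Fin N ↪ Fin N ⊕ Fin N)
  have hμ : (N : ℝ) / ((N : ℝ) - 1) = 1 + ((N : ℝ) - 1)⁻¹ := by
    have : (N : ℝ) - 1 ≠ 0 := by
      have : (2 : ℝ) ≤ N := by exact_mod_cast hN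
      linarith
    field_simp
    ring
  have hfree : ∀ w : Fin c → Fin N, N - c ≤ #(univ.image w)ᶜ := fun w => by
    have := card_image_le (s := univ) (f := w)
    rw [card_compl, Fintype.card_fin]
    rw [card_univ, Fintype.card_fin] at this
    omega
  rw [hH.card_filter_eigenvalues_eq, hμ]
  calc 2 * (N - 1 - c) ≤ (#L - 1) + (#R - 1) := by
        have hL := hfree v
        have hR := hfree v'
        rw [card_map, card_map]
        omega
    _ ≤ finrank ℝ (zeroSumOn ℝ L) + finrank ℝ (zeroSumOn ℝ R) :=
        add_le_add (card_sub_one_le_finrank_zeroSumOn L) (card_sub_one_le_finrank_zeroSumOn R)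
    _ = finrank ℝ ↥(zeroSumOn ℝ L ⊔ zeroSumOn ℝ R) := by
        rw [← Submodule.finrank_sup_add_finrank_inf_eq,
          (disjoint_zeroSumOn (disjoint_map_inl_map_inr _ _)).eq_bot, finrank_bot, add_zero]
    _ ≤ _ := Submodule.finrank_mono (sup_le (zeroSumOn_free_left_le_eigenspace hAdj)
        (zeroSumOn_free_right_le_eigenspace hAdj))

/-- Let `Γ_N` be the graph formed by two disjoint complete graphs `K_N, K'_N` joined by `c`
additional edges `(v_i, v'_i)` with `v_i ∈ K_N`, `v'_i ∈ K'_N`, the `v_i` distinct and the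
`v'_i` distinct, and `c < N - 1`. Then `N/(N-1)` is an eigenvalue of the normalized
Laplacian of `Γ_N` with multiplicity at least `2(N-1-c)`. -/
theorem normLap_joined_complete_graphs_eigenvalue_multiplicity
    (N c : ℕ) (hN : 2 ≤ N) (hc : c < N - 1)
    (v v' : Fin c → Fin N) (hv : Function.Injective v) (hv' : Function.Injective v')
    (G : SimpleGraph (Fin N ⊕ Fin N))
    (hAdj : ∀ x y, G.Adj x y ↔
      (x ≠ y ∧ x.isLeft = y.isLeft) ∨
        ∃ i, (x = Sum.inl (v i) ∧ y = Sum.inr (v' i)) ∨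
             (x = Sum.inr (v' i) ∧ y = Sum.inl (v i)))
    (hH : (normLap G).IsHermitian) :
    2 * (N - 1 - c) ≤
      (Finset.univ.filter fun i => hH.eigenvalues i = (N : ℝ) / ((N : ℝ) - 1)).card :=
  normLap_joined_complete_graphs_eigenvalue_multiplicity_general N c hN v v' G hAdj hH
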